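/- arXiv:1407.5259 — 2 statements merged into one kernel-verified Lean document; each statement's English description precedes it below -/
import Mathlib

section
/- Let A be a Fréchet algebra and U a countably incomplete ultrafilter on I. If the ultrapower (A)_U has an identity element, then A has an identity element. -/
open Filter Topology

noncomputable section

/-- The limit of a real-valued family along an ultrafilter. -/
noncomputable def limU {I : Type*} (U : Ultrafilter I) (f : I → ℝ) : ℝ :=
  limUnder (U : Filter I) f

/-- A Fréchet space structure presented by an increasing, separating sequence of seminorms,
with completeness with respect to this family. -/
structure FrechetSp (E : Type*) [AddCommGroup E] [Module ℂ E] where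
  P : ℕ → Seminorm ℂ E
  mono : ∀ (n : ℕ) (x : E), P n x ≤ P (n + 1) x
  sep : ∀ x : E, (∀ n, P n x = 0) → x = 0
  complete : ∀ x : ℕ → E,
    (∀ n : ℕ, ∀ ε : ℝ, 0 < ε → ∃ N, ∀ j k, N ≤ j → N ≤ k → P n (x j - x k) < ε) →
    ∃ L : E, ∀ n, Filter.Tendsto (fun j => P n (x j - L)) Filter.atTop (nhds 0)

/-- A Fréchet algebra: a Fréchet space whose seminorms are submultiplicative. -/
structure FrechetAlg (A : Type*) [NonUnitalRing A] [Module ℂ A] extends FrechetSp A where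
  submul : ∀ (n : ℕ) (x y : A), P n (x * y) ≤ P n x * P n y

/-- `ℓ∞(I,E)`: the families that are bounded with respect to every seminorm. -/
def linfSet {E : Type*} [AddCommGroup E] [Module ℂ E] (FE : FrechetSp E) (I : Type*) :
    Set (I → E) :=
  {x | ∀ n : ℕ, BddAbove (Set.range fun i => FE.P n (x i))}

/-- The families whose seminorms tend to `0` along the ultrafilter `U`. -/
def nullSet {E : Type*} [AddCommGroup E] [Module ℂ E] {I : Type*} (FE : FrechetSp E)
    (U : Ultrafilter I) : Set (I → E) :=
  {x | ∀ n : ℕ, Filter.Tendsto (fun i => FE.P n (x i)) (U : Filter I) (nhds 0)}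

/-- The sup-seminorm `Q_n` on `ℓ∞(I,E)`. -/
noncomputable def supSem {E : Type*} [AddCommGroup E] [Module ℂ E] {I : Type*}
    (FE : FrechetSp E) (n : ℕ) (x : I → E) : ℝ :=
  sSup (Set.range fun i => FE.P n (x i))

/-- A countably incomplete ultrafilter. -/
def CountablyIncomplete {I : Type*} (U : Ultrafilter I) : Prop :=
  ∃ V : ℕ → Set I, (∀ n, V n ∈ U) ∧ (∀ n, V (n + 1) ⊆ V n) ∧ (⋂ n, V n) = ∅

/-- Keisler's `κ`-good ultrafilters. -/
def IsGoodUltrafilter {I : Type u} (κ : Cardinal.{u}) (U : Ultrafilter I) : Prop :=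
  ∀ (β : Type u) [DecidableEq β], Cardinal.mk β ≤ κ →
    ∀ f : Finset β → Set I, (∀ u, f u ∈ U) → (∀ u w : Finset β, u ⊆ w → f w ⊆ f u) →
      ∃ g : Finset β → Set I, (∀ u, g u ∈ U) ∧ (∀ u w : Finset β, g (u ∪ w) = g u ∩ g w) ∧
        ∀ u, g u ⊆ f u

/-- A set bounded with respect to every seminorm of the family. -/
def IsBddSet {E : Type*} [AddCommGroup E] [Module ℂ E] (FE : FrechetSp E) (B : Set E) : Prop :=
  ∀ n : ℕ, BddAbove ((FE.P n) '' B)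

/-- `ℵ(E) = max(ℵ_U(E), ℵ_B(E))`; for a metrizable space `ℵ_U(E) = ℵ₀`, and `ℵ_B(E)` is the
least cardinality of a fundamental family of bounded sets. -/
noncomputable def alephE {E : Type u} [AddCommGroup E] [Module ℂ E] (FE : FrechetSp E) :
    Cardinal.{u} :=
  max Cardinal.aleph0
    (sInf {c : Cardinal.{u} | ∃ S : Set (Set E), Cardinal.mk ↥S = c ∧ (∀ B ∈ S, IsBddSet FE B) ∧
      ∀ B : Set E, IsBddSet FE B → ∃ D ∈ S, B ⊆ D})

/-- An abstract presentation of the ultrapower `(E)_U = ℓ∞(I,E)/N_U` of a Fréchet space: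
a quotient map `π` defined on bounded families, linear there, with
`P'_n(π x) = lim_U P_n(x_i)` and kernel `N_U`. -/
structure Ultrapower {I : Type*} (U : Ultrafilter I) {E EU : Type*}
    [AddCommGroup E] [Module ℂ E] [AddCommGroup EU] [Module ℂ EU]
    (FE : FrechetSp E) (FEU : FrechetSp EU) where
  π : (I → E) → EU
  surj : ∀ z : EU, ∃ x ∈ linfSet FE I, π x = z
  map_add : ∀ x y : I → E, x ∈ linfSet FE I → y ∈ linfSet FE I → π (x + y) = π x + π y
  map_smul : ∀ (c : ℂ) (x : I → E), x ∈ linfSet FE I → π (c • x) = c • π x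
  norm_eq : ∀ x ∈ linfSet FE I, ∀ n, FEU.P n (π x) = limU U fun i => FE.P n (x i)
  zero_class : ∀ x ∈ linfSet FE I, (π x = 0 ↔ x ∈ nullSet FE U)

/-- An abstract presentation of the completed projective tensor product `G = E ⊗̂ F`:
a bilinear map whose finite sums are dense and on which each seminorm of `G` is
the projective tensor seminorm. -/
structure ProjTensor {E F G : Type*} [AddCommGroup E] [Module ℂ E] [AddCommGroup F] [Module ℂ F]
    [AddCommGroup G] [Module ℂ G] (FE : FrechetSp E) (FF : FrechetSp F) (FG : FrechetSp G) where
  ι : E →ₗ[ℂ] F →ₗ[ℂ] G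
  dense : ∀ T : G, ∀ n : ℕ, ∀ ε : ℝ, 0 < ε →
    ∃ (k : ℕ) (x : Fin k → E) (y : Fin k → F), FG.P n (T - ∑ j, ι (x j) (y j)) < ε
  seminorm_eq : ∀ (n k : ℕ) (x : Fin k → E) (y : Fin k → F),
    FG.P n (∑ j, ι (x j) (y j)) =
      sInf {r : ℝ | ∃ (m : ℕ) (a : Fin m → E) (b : Fin m → F),
        (∑ j, ι (a j) (b j)) = ∑ j, ι (x j) (y j) ∧ r = ∑ j, FE.P n (a j) * FF.P n (b j)}

/-- Continuity of a linear map with respect to two families of seminorms. -/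
def SemCont {E F : Type*} [AddCommGroup E] [Module ℂ E] [AddCommGroup F] [Module ℂ F]
    {ι κ : Type*} (P : ι → Seminorm ℂ E) (Q : κ → Seminorm ℂ F) (T : E →ₗ[ℂ] F) : Prop :=
  ∀ β : κ, ∃ (s : Finset ι) (C : ℝ), 0 < C ∧ ∀ x : E, Q β (T x) ≤ C * ∑ a ∈ s, P a x

/-- Precompactness (total boundedness) with respect to a family of seminorms. -/
def IsPrecompactSem {E : Type*} [AddCommGroup E] [Module ℂ E] {ι : Type*}
    (P : ι → Seminorm ℂ E) (K : Set E) : Prop :=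
  ∀ ε : ℝ, 0 < ε → ∀ s : Finset ι, ∃ t : Finset E, ∀ x ∈ K, ∃ c ∈ t, ∀ a ∈ s, P a (x - c) < ε

/-- A finite rank linear map. -/
def FinRank {E F : Type*} [AddCommGroup E] [Module ℂ E] [AddCommGroup F] [Module ℂ F]
    (S : E →ₗ[ℂ] F) : Prop :=
  FiniteDimensional ℂ (LinearMap.range S)

/-- The approximation property: finite rank continuous operators are dense in continuous
operators for the topology of uniform convergence on precompact sets. -/
def HasAP {E : Type*} [AddCommGroup E] [Module ℂ E] {ι : Type*} (P : ι → Seminorm ℂ E) : Prop :=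
  ∀ T : E →ₗ[ℂ] E, SemCont P P T → ∀ K : Set E, IsPrecompactSem P K → ∀ ε : ℝ, 0 < ε →
    ∀ s : Finset ι, ∃ S : E →ₗ[ℂ] E, SemCont P P S ∧ FinRank S ∧
      ∀ x ∈ K, ∀ a ∈ s, P a (T x - S x) < ε

/-- A (two-sided) bounded approximate identity for the multiplication of `B`, relative to a
subset `S` (the "algebra") and a family of seminorm-values `R`. -/
def BddApproxIdOn {B : Type*} [Mul B] [Sub B] (S : Set B) (R : ℕ → B → ℝ) : Prop :=
  ∃ (J : Type) (_ : Nonempty J) (pr : Preorder J)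
    (_ : IsDirected J fun a b => pr.toLE.le a b) (u : J → B) (C : ℝ),
    0 < C ∧ (∀ α, u α ∈ S) ∧ (∀ (n : ℕ) (α : J), R n (u α) < C) ∧
    ∀ a ∈ S, ∀ n : ℕ,
      Filter.Tendsto (fun α => R n (a - u α * a)) (@Filter.atTop J pr) (nhds 0) ∧
      Filter.Tendsto (fun α => R n (a - a * u α)) (@Filter.atTop J pr) (nhds 0)

/-- A left bounded approximate identity. -/
def LeftBddApproxIdOn {B : Type*} [Mul B] [Sub B] (S : Set B) (R : ℕ → B → ℝ) : Prop :=
  ∃ (J : Type) (_ : Nonempty J) (pr : Preorder J)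
    (_ : IsDirected J fun a b => pr.toLE.le a b) (u : J → B) (C : ℝ),
    0 < C ∧ (∀ α, u α ∈ S) ∧ (∀ (n : ℕ) (α : J), R n (u α) < C) ∧
    ∀ a ∈ S, ∀ n : ℕ,
      Filter.Tendsto (fun α => R n (a - u α * a)) (@Filter.atTop J pr) (nhds 0)

/-- A right bounded approximate identity. -/
def RightBddApproxIdOn {B : Type*} [Mul B] [Sub B] (S : Set B) (R : ℕ → B → ℝ) : Prop :=
  ∃ (J : Type) (_ : Nonempty J) (pr : Preorder J)
    (_ : IsDirected J fun a b => pr.toLE.le a b) (u : J → B) (C : ℝ),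
    0 < C ∧ (∀ α, u α ∈ S) ∧ (∀ (n : ℕ) (α : J), R n (u α) < C) ∧
    ∀ a ∈ S, ∀ n : ℕ,
      Filter.Tendsto (fun α => R n (a - a * u α)) (@Filter.atTop J pr) (nhds 0)

/-- A locally bounded (two-sided) approximate identity: for each `n` a net bounded in the
`n`-th seminorm which is approximately an identity in the `n`-th seminorm. -/
def LocBddApproxIdOn {B : Type*} [Mul B] [Sub B] (S : Set B) (R : ℕ → B → ℝ) : Prop :=
  ∀ n : ℕ, ∃ (J : Type) (_ : Nonempty J) (pr : Preorder J)
    (_ : IsDirected J fun a b => pr.toLE.le a b) (u : J → B) (C : ℝ),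
    0 < C ∧ (∀ α, u α ∈ S) ∧ (∀ α : J, R n (u α) < C) ∧
    ∀ a ∈ S,
      Filter.Tendsto (fun α => R n (a - u α * a)) (@Filter.atTop J pr) (nhds 0) ∧
      Filter.Tendsto (fun α => R n (a - a * u α)) (@Filter.atTop J pr) (nhds 0)

/-- A locally bounded left approximate identity. -/
def LeftLocBddApproxIdOn {B : Type*} [Mul B] [Sub B] (S : Set B) (R : ℕ → B → ℝ) : Prop :=
  ∀ n : ℕ, ∃ (J : Type) (_ : Nonempty J) (pr : Preorder J)
    (_ : IsDirected J fun a b => pr.toLE.le a b) (u : J → B) (C : ℝ),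
    0 < C ∧ (∀ α, u α ∈ S) ∧ (∀ α : J, R n (u α) < C) ∧
    ∀ a ∈ S, Filter.Tendsto (fun α => R n (a - u α * a)) (@Filter.atTop J pr) (nhds 0)

/-- A locally bounded right approximate identity. -/
def RightLocBddApproxIdOn {B : Type*} [Mul B] [Sub B] (S : Set B) (R : ℕ → B → ℝ) : Prop :=
  ∀ n : ℕ, ∃ (J : Type) (_ : Nonempty J) (pr : Preorder J)
    (_ : IsDirected J fun a b => pr.toLE.le a b) (u : J → B) (C : ℝ),
    0 < C ∧ (∀ α, u α ∈ S) ∧ (∀ α : J, R n (u α) < C) ∧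
    ∀ a ∈ S, Filter.Tendsto (fun α => R n (a - a * u α)) (@Filter.atTop J pr) (nhds 0)

/-!
If `E` represents the identity of the ultrapower, then `E i * E j ≈ E i` for `U`-most `j`,
and `E i * E (f i) ≈ E (f i)` for `U`-most `i`, for every `f : I → I`. Letting `f` pick a bad
`j` for each `i` shows that `E` is Cauchy along `U` in every seminorm, so by completeness it
converges along `U` to some `L`; passing to the limit in `E i * a ≈ a ≈ a * E i` shows that
`L` is an identity.
-/

theorem Filter.eventually_forall_of_forall_eventually_comp {α β : Type*} {l : Filter α}
    {p : α → β → Prop} (h : ∀ f : α → β, ∀ᶠ a in l, p a (f a)) : ∀ᶠ a in l, ∀ b, p a b := by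
  by_contra hne
  simp only [Filter.not_eventually, not_forall] at hne
  obtain ⟨-, b₀, -⟩ := hne.exists
  have : Nonempty β := ⟨b₀⟩
  have hwitness : ∀ a, (∃ b, ¬p a b) → ∃ b, ¬p a b := fun _ h => h
  choose! f hf using hwitness
  obtain ⟨a, hpa, hbad⟩ := ((h f).and_frequently hne).exists
  exact hf a hbad hpa

theorem tendsto_zero_of_forall_eventually_lt {α : Type*} {l : Filter α} {f : α → ℝ}
    (hf : ∀ a, 0 ≤ f a) (h : ∀ ε > 0, ∀ᶠ a in l, f a < ε) : Tendsto f l (𝓝 0) :=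
  tendsto_order.2 ⟨fun _ hε => Eventually.of_forall fun a => hε.trans_le (hf a), h⟩

namespace FrechetSp

variable {E : Type*} [AddCommGroup E] [Module ℂ E] (FE : FrechetSp E)

theorem P_mono {n m : ℕ} (h : n ≤ m) (x : E) : FE.P n x ≤ FE.P m x :=
  monotone_nat_of_le_succ (fun k => FE.mono k x) h

def CauchyAlong {I : Type*} (l : Filter I) (x : I → E) : Prop :=
  ∀ (n : ℕ) (ε : ℝ), 0 < ε → ∃ W ∈ l, ∀ i ∈ W, ∀ j ∈ W, FE.P n (x i - x j) < ε

variable {FE}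

theorem CauchyAlong.exists_antitone {I : Type*} {l : Filter I} {x : I → E}
    (hx : FE.CauchyAlong l x) :
    ∃ T : ℕ → Set I, Antitone T ∧ (∀ k, T k ∈ l) ∧
      ∀ k, ∀ i ∈ T k, ∀ j ∈ T k, FE.P k (x i - x j) < 1 / (k + 1) := by
  choose W hW_mem hW using fun k : ℕ => hx k (1 / (k + 1)) Nat.one_div_pos_of_nat
  refine ⟨fun k => ⋂ m ≤ k, W m, ?_, ?_, ?_⟩
  · exact fun j k hjk => Set.biInter_subset_biInter_left fun m hm => le_trans hm hjk
  · exact fun k => (Filter.biInter_mem (Set.finite_le_nat k)).2 fun m _ => hW_mem m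
  · intro k i hi j hj
    simp only [Set.mem_iInter] at hi hj
    exact hW k i (hi k le_rfl) j (hj k le_rfl)

theorem CauchyAlong.exists_tendsto {I : Type*} {l : Filter I} [l.NeBot] {x : I → E}
    (hx : FE.CauchyAlong l x) : ∃ L, ∀ n, Tendsto (fun i => FE.P n (x i - L)) l (𝓝 0) := by
  obtain ⟨T, hT_anti, hT_mem, hT_small⟩ := hx.exists_antitone
  choose idx hidx using fun k => l.nonempty_of_mem (hT_mem k)
  have hseq : ∀ n (ε : ℝ), 0 < ε → ∃ N, ∀ j k, N ≤ j → N ≤ k →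
      FE.P n (x (idx j) - x (idx k)) < ε := by
    intro n ε hε
    obtain ⟨N, hN⟩ := exists_nat_one_div_lt hε
    refine ⟨max n N, fun j k hj hk => ?_⟩
    calc FE.P n (x (idx j) - x (idx k)) ≤ FE.P (max n N) (x (idx j) - x (idx k)) :=
          FE.P_mono (le_max_left n N) _
      _ < 1 / (max n N + 1 : ℕ) := by
          exact_mod_cast hT_small _ _ (hT_anti hj (hidx j)) _ (hT_anti hk (hidx k))
      _ ≤ 1 / (N + 1) := by gcongr; exact_mod_cast Nat.succ_le_succ (le_max_right n N)
      _ < ε := hN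
  obtain ⟨L, hL⟩ := FE.complete _ hseq
  refine ⟨L, fun n => tendsto_zero_of_forall_eventually_lt (fun _ => apply_nonneg _ _)
    fun ε hε => ?_⟩
  obtain ⟨k, hk_lim, hk_small, hnk⟩ := (((hL n).eventually_lt_const (half_pos hε)).and
    ((tendsto_one_div_add_atTop_nhds_zero_nat.eventually_lt_const (half_pos hε)).and
      (eventually_ge_atTop n))).exists
  filter_upwards [hT_mem k] with j hj
  calc FE.P n (x j - L) ≤ FE.P n (x j - x (idx k)) + FE.P n (x (idx k) - L) :=
        le_map_sub_add_map_sub _ _ _ _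
    _ ≤ FE.P k (x j - x (idx k)) + FE.P n (x (idx k) - L) :=
        add_le_add_left (FE.P_mono hnk _) _
    _ < ε / 2 + ε / 2 := add_lt_add ((hT_small k j hj _ (hidx k)).trans hk_small) hk_lim
    _ = ε := add_halves ε

theorem const_mem_linfSet (I : Type*) (a : E) : (fun _ : I => a) ∈ linfSet FE I :=
  fun n => ⟨FE.P n a, by rintro _ ⟨_, rfl⟩; exact le_rfl⟩

theorem comp_mem_linfSet {I J : Type*} {x : I → E} (hx : x ∈ linfSet FE I) (f : J → I) :
    x ∘ f ∈ linfSet FE J :=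
  fun n => (hx n).mono (Set.range_comp_subset_range f fun i => FE.P n (x i))

end FrechetSp

namespace FrechetAlg

variable {A : Type*} [NonUnitalRing A] [Module ℂ A] (FA : FrechetAlg A)
  {I : Type*} {l : Filter I} [l.NeBot] {x : I → A} {L : A}

theorem lim_mul_eq_of_tendsto (hxL : ∀ n, Tendsto (fun i => FA.P n (x i - L)) l (𝓝 0)) (a : A)
    (hxa : ∀ n, Tendsto (fun i => FA.P n (x i * a - a)) l (𝓝 0)) : L * a = a := by
  refine sub_eq_zero.1 (FA.sep _ fun n => le_antisymm ?_ (apply_nonneg _ _))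
  refine ge_of_tendsto' (by simpa using ((hxL n).mul_const (FA.P n a)).add (hxa n)) fun i => ?_
  calc FA.P n (L * a - a) ≤ FA.P n (L * a - x i * a) + FA.P n (x i * a - a) :=
        le_map_sub_add_map_sub _ _ _ _
    _ ≤ FA.P n (L - x i) * FA.P n a + FA.P n (x i * a - a) := by
        rw [← sub_mul]; exact add_le_add_left (FA.submul n _ _) _
    _ = FA.P n (x i - L) * FA.P n a + FA.P n (x i * a - a) := by rw [map_sub_rev]

theorem mul_lim_eq_of_tendsto (hxL : ∀ n, Tendsto (fun i => FA.P n (x i - L)) l (𝓝 0)) (a : A)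
    (hax : ∀ n, Tendsto (fun i => FA.P n (a * x i - a)) l (𝓝 0)) : a * L = a := by
  refine sub_eq_zero.1 (FA.sep _ fun n => le_antisymm ?_ (apply_nonneg _ _))
  refine ge_of_tendsto' (by simpa using ((hxL n).const_mul (FA.P n a)).add (hax n)) fun i => ?_
  calc FA.P n (a * L - a) ≤ FA.P n (a * L - a * x i) + FA.P n (a * x i - a) :=
        le_map_sub_add_map_sub _ _ _ _
    _ ≤ FA.P n a * FA.P n (L - x i) + FA.P n (a * x i - a) := by
        rw [← mul_sub]; exact add_le_add_left (FA.submul n _ _) _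
    _ = FA.P n a * FA.P n (x i - L) + FA.P n (a * x i - a) := by rw [map_sub_rev]

theorem cauchyAlong_of_approx_unit {E : I → A}
    (hleft : ∀ (f : I → I) n, Tendsto (fun i => FA.P n (E i * E (f i) - E (f i))) l (𝓝 0))
    (hright : ∀ a n, Tendsto (fun j => FA.P n (a * E j - a)) l (𝓝 0)) :
    FA.CauchyAlong l E := by
  intro n ε hε
  have hδ : 0 < ε / 4 := by positivity
  -- Uniformity in `j` comes from applying `hleft` to every choice function `f`.
  have hnear : ∀ᶠ i in l, ∀ j,
      FA.P n (E i * E j - E i) < ε / 4 → FA.P n (E i - E j) < ε / 2 := by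
    refine Filter.eventually_forall_of_forall_eventually_comp fun f => ?_
    filter_upwards [(hleft f n).eventually_lt_const hδ] with i hi hfi
    calc FA.P n (E i - E (f i))
          ≤ FA.P n (E i - E i * E (f i)) + FA.P n (E i * E (f i) - E (f i)) :=
            le_map_sub_add_map_sub _ _ _ _
      _ < ε / 4 + ε / 4 := by rw [map_sub_rev]; exact add_lt_add hfi hi
      _ = ε / 2 := by ring
  obtain ⟨i₀, hi₀⟩ := hnear.exists
  refine ⟨_, (hright (E i₀) n).eventually_lt_const hδ, fun i hi j hj => ?_⟩
  calc FA.P n (E i - E j) ≤ FA.P n (E i - E i₀) + FA.P n (E i₀ - E j) :=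
        le_map_sub_add_map_sub _ _ _ _
    _ < ε / 2 + ε / 2 := by rw [map_sub_rev]; exact add_lt_add (hi₀ i hi) (hi₀ j hj)
    _ = ε := add_halves ε

end FrechetAlg

theorem stmt_7_general {A : Type*} [NonUnitalRing A] [Module ℂ A] (FA : FrechetAlg A)
    {I : Type*} (U : Ultrafilter I)
    (E : I → A) (hE : E ∈ linfSet FA.toFrechetSp I)
    (hid : ∀ x ∈ linfSet FA.toFrechetSp I,
      (E * x - x) ∈ nullSet FA.toFrechetSp U ∧ (x * E - x) ∈ nullSet FA.toFrechetSp U) :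
    ∃ e : A, ∀ a : A, e * a = a ∧ a * e = a := by
  have hconst : ∀ a : A, (fun _ : I => a) ∈ linfSet FA.toFrechetSp I :=
    FrechetSp.const_mem_linfSet I
  have hcauchy : FA.CauchyAlong (U : Filter I) E :=
    FA.cauchyAlong_of_approx_unit (fun f => (hid _ (FrechetSp.comp_mem_linfSet hE f)).1)
      fun a => (hid _ (hconst a)).2
  obtain ⟨L, hL⟩ := hcauchy.exists_tendsto
  exact ⟨L, fun a => ⟨FA.lim_mul_eq_of_tendsto hL a (hid _ (hconst a)).1,
    FA.mul_lim_eq_of_tendsto hL a (hid _ (hconst a)).2⟩⟩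

theorem stmt_7 {A : Type*} [NonUnitalRing A] [Module ℂ A] (FA : FrechetAlg A)
    {I : Type*} (U : Ultrafilter I) (hU : CountablyIncomplete U)
    (E : I → A) (hE : E ∈ linfSet FA.toFrechetSp I)
    (hid : ∀ x ∈ linfSet FA.toFrechetSp I,
      (E * x - x) ∈ nullSet FA.toFrechetSp U ∧ (x * E - x) ∈ nullSet FA.toFrechetSp U) :
    ∃ e : A, ∀ a : A, e * a = a ∧ a * e = a :=
  stmt_7_general FA U E hE hid

end
end

section
/- Let (E,(P_n)) be a Fréchet space with the approximation property and (F,(Q_n)) a Fréchet space. Let u = Σ_{n=1}^∞ x_n ⊗ y_n ∈ E ⊗̂ F (projective tensor product) where (x_n) and (y_n) are bounded sequences in E and F respectively with Σ P_k(x_n) Q_k(y_n) < ∞ for all k. If Σ_{n=1}^∞ ψ(y_n) x_n = 0 in E for every continuous linear functional ψ ∈ F', then u = 0. -/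
open Filter Topology

noncomputable section

/-!
Grothendieck's argument. As `∑ₙ P_k(xₙ) Q_k(yₙ) < ∞` for every `k`, a diagonal choice of
seminorm indices and the estimate `∑ₙ cₙ / √(∑_{i ≥ n} cᵢ) ≤ 2 √(∑ᵢ cᵢ)` give scalars `tₙ > 0`
with `tₙ xₙ → 0` and `∑ₙ Q_k(yₙ / tₙ) < ∞` for all `k`; the rescaling changes neither the terms
`xₙ ⊗ yₙ` nor `ψ(yₙ) xₙ`. The null sequence `(tₙ xₙ)` has precompact range, so the approximation
property yields a continuous finite rank `S = ∑ᵢ φᵢ(·) eᵢ` with `P_k(tₙ xₙ - S(tₙ xₙ)) ≤ ε` for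
all `n`, and the projective seminorm of the partial sums is at most
`ε ∑ₙ Q_k(yₙ / tₙ) + ∑ᵢ P_k(eᵢ) Q_k(∑ₙ φᵢ(xₙ) yₙ)`. The series `∑ₙ φᵢ(xₙ) yₙ` converge
absolutely, and every continuous `ψ` kills their sums since `ψ(∑ₙ φᵢ(xₙ) yₙ) = φᵢ(∑ₙ ψ(yₙ) xₙ) = 0`;
by Hahn–Banach they vanish, so `P_k(u) ≤ ε ∑ₙ Q_k(yₙ / tₙ)` for every `ε > 0`.
-/

theorem exists_tendsto_atTop_summable_diag {f : ℕ → ℕ → ℝ} (hf0 : ∀ k n, 0 ≤ f k n)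
    (hf : ∀ k, Summable (f k)) :
    ∃ m : ℕ → ℕ, Tendsto m atTop atTop ∧ Summable fun n => f (m n) n := by
  classical
  have hN : ∀ k, ∃ N, ∑' i, f k (i + N) ≤ (1 / 2) ^ k := fun k =>
    ((tendsto_sum_nat_add (f k)).eventually_le_const (by positivity)).exists
  choose N hN using hN
  let g : ℕ × ℕ → ℝ := fun p => if N p.1 ≤ p.2 then f p.1 p.2 else 0
  have hg0 : ∀ p, 0 ≤ g p := fun p => by dsimp only [g]; split_ifs <;> simp [hf0]
  have hgf : ∀ k n, g (k, n) ≤ f k n := fun k n => by dsimp only [g]; split_ifs <;> simp [hf0]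
  have hg_row : ∀ k, ∑' n, g (k, n) = ∑' i, f k (i + N k) := fun k => by
    rw [← ((hf k).of_nonneg_of_le (fun n => hg0 (k, n)) (hgf k)).sum_add_tsum_nat_add (N k),
      Finset.sum_eq_zero fun i hi => if_neg (not_le.2 (Finset.mem_range.1 hi)), zero_add]
    simp [g]
  have hg : Summable g := by
    refine (summable_prod_of_nonneg hg0).2
      ⟨fun k => (hf k).of_nonneg_of_le (fun n => hg0 (k, n)) (hgf k), ?_⟩
    refine summable_geometric_two.of_nonneg_of_le (fun k => tsum_nonneg fun n => hg0 (k, n))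
      fun k => ?_
    rw [hg_row]
    exact hN k
  refine ⟨fun n => Nat.findGreatest (fun k => N k ≤ n) n, ?_, ?_⟩
  · refine tendsto_atTop_atTop.2 fun K => ⟨max K (N K), fun n hn => ?_⟩
    exact Nat.le_findGreatest (le_of_max_le_left hn) (le_of_max_le_right hn)
  · refine ((hf 0).add hg.prod_symm.prod).of_nonneg_of_le (fun n => hf0 _ n) fun n => ?_
    set m := Nat.findGreatest (fun k => N k ≤ n) n with hm
    show f m n ≤ f 0 n + ∑' k, g (k, n)
    have hcol : g (m, n) ≤ ∑' k, g (k, n) :=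
      hg.prod_symm.prod_factor n |>.le_tsum m fun k _ => hg0 (k, n)
    rcases eq_or_ne m 0 with h0 | h0
    · rw [h0]
      linarith [hcol.trans' (hg0 (m, n))]
    · have hNm : N m ≤ n := Nat.findGreatest_of_ne_zero (P := fun k => N k ≤ n) hm.symm h0
      have hfg : f m n = g (m, n) := (if_pos hNm).symm
      linarith [hf0 0 n]

theorem exists_pos_tendsto_zero_summable_div {c : ℕ → ℝ} (hc0 : ∀ n, 0 < c n)
    (hc : Summable c) :
    ∃ s : ℕ → ℝ, (∀ n, 0 < s n) ∧ Tendsto s atTop (𝓝 0) ∧ Summable fun n => c n / s n := by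
  set T : ℕ → ℝ := fun n => ∑' i, c (i + n)
  have hT_succ : ∀ n, T n = c n + T (n + 1) := fun n => by
    show ∑' i, c (i + n) = c n + ∑' i, c (i + (n + 1))
    rw [((summable_nat_add_iff n).2 hc).tsum_eq_zero_add]
    simp only [zero_add, add_assoc, add_comm 1 n]
  have hT_pos : ∀ n, 0 < T n := fun n =>
    ((summable_nat_add_iff n).2 hc).tsum_pos (fun i => (hc0 _).le) 0 (hc0 _)
  refine ⟨fun n => √(T n), fun n => Real.sqrt_pos.2 (hT_pos n), ?_, ?_⟩
  · have := (Real.continuous_sqrt.tendsto 0).comp (tendsto_sum_nat_add c)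
    rwa [Real.sqrt_zero] at this
  · -- `c n = T n - T (n + 1) = (√(T n) - √(T (n + 1))) * (√(T n) + √(T (n + 1)))`
    have hstep : ∀ n, c n / √(T n) ≤ 2 * (√(T n) - √(T (n + 1))) := fun n => by
      have hA := Real.sq_sqrt (hT_pos n).le
      have hB := Real.sq_sqrt (hT_pos (n + 1)).le
      have hBA : √(T (n + 1)) ≤ √(T n) := Real.sqrt_le_sqrt (by linarith [hT_succ n, hc0 n])
      rw [div_le_iff₀ (Real.sqrt_pos.2 (hT_pos n))]
      nlinarith [hT_succ n, Real.sqrt_nonneg (T (n + 1))]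
    refine summable_of_sum_range_le (c := 2 * √(T 0))
      (fun n => (div_pos (hc0 n) (Real.sqrt_pos.2 (hT_pos n))).le) fun N => ?_
    calc ∑ n ∈ Finset.range N, c n / √(T n)
        ≤ ∑ n ∈ Finset.range N, 2 * (√(T n) - √(T (n + 1))) := Finset.sum_le_sum fun n _ => hstep n
      _ = 2 * (√(T 0) - √(T N)) := by rw [← Finset.mul_sum, Finset.sum_range_sub']
      _ ≤ 2 * √(T 0) := by linarith [Real.sqrt_nonneg (T N)]

theorem exists_pos_tendsto_mul_zero_summable_div {a b : ℕ → ℝ} (ha : ∀ n, 0 ≤ a n)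
    (hb : ∀ n, 0 ≤ b n) (hab : Summable fun n => a n * b n) :
    ∃ t : ℕ → ℝ, (∀ n, 0 < t n) ∧ Tendsto (fun n => t n * a n) atTop (𝓝 0) ∧
      Summable fun n => b n / t n := by
  -- `a + ρ` is positive, and `b * ρ ≤ 2⁻ⁿ` keeps `(a + ρ) * b` summable
  set ρ : ℕ → ℝ := fun n => (1 / 2) ^ n / (1 + b n)
  have hρ : ∀ n, 0 < ρ n := fun n => div_pos (by positivity) (by linarith [hb n])
  have hbρ : ∀ n, b n * ρ n ≤ (1 / 2) ^ n := fun n => by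
    rw [mul_div_assoc', div_le_iff₀ (by linarith [hb n])]
    nlinarith [pow_pos (one_half_pos (α := ℝ)) n]
  obtain ⟨s, hs0, hs, hcs⟩ := exists_pos_tendsto_zero_summable_div
    (c := fun n => a n * b n + (1 / 2) ^ n) (fun n => by positivity [ha n, hb n])
    (hab.add summable_geometric_two)
  have haρ : ∀ n, 0 < a n + ρ n := fun n => by linarith [ha n, hρ n]
  refine ⟨fun n => s n / (a n + ρ n), fun n => div_pos (hs0 n) (haρ n), ?_, ?_⟩
  · refine squeeze_zero (fun n => mul_nonneg (div_pos (hs0 n) (haρ n)).le (ha n))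
      (fun n => ?_) hs
    rw [div_mul_eq_mul_div, div_le_iff₀ (haρ n)]
    nlinarith [hs0 n, hρ n]
  · refine hcs.of_nonneg_of_le (fun n => div_nonneg (hb n) (div_pos (hs0 n) (haρ n)).le)
      fun n => ?_
    rw [div_div_eq_mul_div]
    exact div_le_div_of_nonneg_right (by nlinarith [hbρ n]) (hs0 n).le

theorem exists_pos_rescaling {a b : ℕ → ℕ → ℝ} (ha : ∀ k n, 0 ≤ a k n) (hb : ∀ k n, 0 ≤ b k n)
    (ha_mono : ∀ n, Monotone fun k => a k n) (hb_mono : ∀ n, Monotone fun k => b k n)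
    (hab : ∀ k, Summable fun n => a k n * b k n) :
    ∃ t : ℕ → ℝ, (∀ n, 0 < t n) ∧ ∀ k, Tendsto (fun n => t n * a k n) atTop (𝓝 0) ∧
      Summable fun n => b k n / t n := by
  obtain ⟨m, hm, hsum⟩ :=
    exists_tendsto_atTop_summable_diag (fun k n => mul_nonneg (ha k n) (hb k n)) hab
  obtain ⟨t, ht0, hta, htb⟩ := exists_pos_tendsto_mul_zero_summable_div
    (fun n => ha (m n) n) (fun n => hb (m n) n) hsum
  refine ⟨t, ht0, fun k => ⟨?_, ?_⟩⟩ <;> have hk := hm.eventually_ge_atTop k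
  · refine squeeze_zero' (.of_forall fun n => mul_nonneg (ht0 n).le (ha k n))
      (hk.mono fun n hn => ?_) hta
    exact mul_le_mul_of_nonneg_left (ha_mono n hn) (ht0 n).le
  · refine htb.of_norm_bounded_eventually ?_
    rw [Nat.cofinite_eq_atTop]
    refine hk.mono fun n hn => ?_
    rw [Real.norm_of_nonneg (div_nonneg (hb k n) (ht0 n).le)]
    exact div_le_div_of_nonneg_right (hb_mono n hn) (ht0 n).le

section SeminormFamilies

variable {E F : Type*} [AddCommGroup E] [Module ℂ E] [AddCommGroup F] [Module ℂ F]

theorem norm_withSeminorms_unit (𝕜 V : Type*) [NormedField 𝕜] [SeminormedAddCommGroup V]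
    [NormedSpace 𝕜 V] : WithSeminorms fun _ : Unit => normSeminorm 𝕜 V := by
  rw [SeminormFamily.withSeminorms_iff_nhds_eq_iInf, iInf_const, coe_normSeminorm,
    comap_norm_nhds_zero]

theorem semCont_iff_continuous {ι κ : Type*} [Nonempty ι] [Nonempty κ]
    [TopologicalSpace E] [TopologicalSpace F] {p : ι → Seminorm ℂ E} {q : κ → Seminorm ℂ F}
    (hp : WithSeminorms p) (hq : WithSeminorms q) (T : E →ₗ[ℂ] F) :
    SemCont p q T ↔ Continuous T := by
  constructor
  · intro hT
    refine hp.continuous_of_isBounded hq T (Seminorm.IsBounded.of_real fun β => ?_)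
    obtain ⟨s, C, hC, hCT⟩ := hT β
    refine ⟨s, C * s.card, fun x => (hCT x).trans ?_⟩
    rw [mul_assoc, ← nsmul_eq_mul]
    exact mul_le_mul_of_nonneg_left
      (Finset.sum_le_card_nsmul _ _ _ fun a ha => Seminorm.le_finset_sup_apply ha) hC.le
  · intro hT β
    obtain ⟨s, C, hC0, hC⟩ :=
      Seminorm.bound_of_continuous hp ((q β).comp T) ((hq.continuous_seminorm β).comp hT)
    refine ⟨s, C, NNReal.coe_pos.2 (pos_iff_ne_zero.2 hC0), fun x => (hC x).trans ?_⟩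
    exact mul_le_mul_of_nonneg_left ((Seminorm.finset_sup_le_sum p s x).trans_eq (by simp)) C.2

theorem SemCont.tendsto_zero {ι κ α : Type*} {p : ι → Seminorm ℂ E} {q : κ → Seminorm ℂ F}
    {T : E →ₗ[ℂ] F} (hT : SemCont p q T) {l : Filter α} {v : α → E}
    (hv : ∀ i, Tendsto (fun a => p i (v a)) l (𝓝 0)) (β : κ) :
    Tendsto (fun a => q β (T (v a))) l (𝓝 0) := by
  obtain ⟨s, C, -, hC⟩ := hT β
  refine squeeze_zero (fun a => apply_nonneg _ _) (fun a => hC (v a)) ?_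
  simpa using (tendsto_finsetSum s fun i _ => hv i).const_mul C

theorem isPrecompactSem_range_of_tendsto_zero {ι : Type*} (p : ι → Seminorm ℂ E) {v : ℕ → E}
    (hv : ∀ i, Tendsto (fun n => p i (v n)) atTop (𝓝 0)) : IsPrecompactSem p (Set.range v) := by
  classical
  intro ε hε s
  obtain ⟨N, hN⟩ := eventually_atTop.1
    ((eventually_all_finset s).2 fun i _ => (hv i).eventually_lt_const hε)
  refine ⟨insert 0 ((Finset.range N).image v), ?_⟩
  rintro _ ⟨n, rfl⟩
  rcases lt_or_ge n N with hn | hn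
  · exact ⟨v n, by simpa using .inr ⟨n, hn, rfl⟩, fun i _ => by simpa using hε⟩
  · exact ⟨0, by simp, fun i hi => by simpa using hN n hn i hi⟩

end SeminormFamilies

theorem exists_sum_smul_of_finiteDimensional_range {𝕜 E F : Type*} [NontriviallyNormedField 𝕜]
    [CompleteSpace 𝕜] [AddCommGroup E] [Module 𝕜 E] [TopologicalSpace E] [AddCommGroup F]
    [Module 𝕜 F] [TopologicalSpace F] [IsTopologicalAddGroup F] [ContinuousSMul 𝕜 F] [T2Space F]
    {S : E →ₗ[𝕜] F} (hS : Continuous S) [FiniteDimensional 𝕜 (LinearMap.range S)] :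
    ∃ (r : ℕ) (e : Fin r → F) (φ : Fin r → StrongDual 𝕜 E), ∀ x, S x = ∑ i, φ i x • e i := by
  let b := Module.finBasis 𝕜 (LinearMap.range S)
  refine ⟨_, fun i => b i, fun i => ⟨(b.coord i).comp S.rangeRestrict,
    (LinearMap.continuous_of_finiteDimensional (b.coord i)).comp
      (hS.subtype_mk S.mem_range_self)⟩, fun x => ?_⟩
  calc S x = (S.rangeRestrict x : F) := rfl
    _ = ((∑ i, b.repr (S.rangeRestrict x) i • b i : LinearMap.range S) : F) := by rw [b.sum_repr]
    _ = _ := by simp only [Submodule.coe_sum, Submodule.coe_smul]; rfl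

namespace FrechetSp

variable {E : Type*} [AddCommGroup E] [Module ℂ E] (FE : FrechetSp E)

theorem monotone_seminorm (x : E) : Monotone fun k => FE.P k x :=
  monotone_nat_of_le_succ fun k => FE.mono k x

theorem exists_withSeminorms_t1Space :
    ∃ _ : TopologicalSpace E, WithSeminorms FE.P ∧ T1Space E :=
  let _ : TopologicalSpace E := (SeminormFamily.moduleFilterBasis FE.P).topology
  have hE : WithSeminorms FE.P := ⟨rfl⟩
  ⟨_, hE, hE.T1_of_separating fun x hx => by contrapose! hx; exact FE.sep x hx⟩

theorem exists_tendsto_sum_of_summable {f : ℕ → E} (hf : ∀ k, Summable fun n => FE.P k (f n)) :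
    ∃ z, ∀ k, Tendsto (fun N => FE.P k (∑ n ∈ Finset.range N, f n - z)) atTop (𝓝 0) := by
  refine FE.complete _ fun k ε hε => ?_
  let _ := (FE.P k).toSeminormedAddCommGroup
  have := cauchySeq_range_of_norm_bounded (f := f) (hf k).hasSum.tendsto_sum_nat.cauchySeq
    fun n => le_rfl
  obtain ⟨N, hN⟩ := Metric.cauchySeq_iff.1 this ε hε
  exact ⟨N, fun j l hj hl => (dist_eq_norm _ _).symm.trans_lt (hN j hj l hl)⟩

theorem eq_zero_of_forall_semCont {z : E}
    (hz : ∀ ψ : E →ₗ[ℂ] ℂ, SemCont FE.P (fun _ : Unit => normSeminorm ℂ ℂ) ψ → ψ z = 0) :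
    z = 0 := by
  obtain ⟨_, hE, _⟩ := FE.exists_withSeminorms_t1Space
  have := hE.topologicalAddGroup
  have := hE.continuousSMul
  have := hE.toLocallyConvexSpace
  by_contra hz0
  obtain ⟨ψ, hψ⟩ := RCLike.geometric_hahn_banach_point_point (𝕜 := ℂ) hz0
  have hψz : ψ z = 0 := hz ψ ((semCont_iff_continuous hE (norm_withSeminorms_unit ℂ ℂ) _).2 ψ.cont)
  simp [hψz] at hψ

theorem exists_sum_smul_of_finRank {S : E →ₗ[ℂ] E} (hS : SemCont FE.P FE.P S)
    (hSfin : FinRank S) :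
    ∃ (r : ℕ) (e : Fin r → E) (φ : Fin r → E →ₗ[ℂ] ℂ),
      (∀ i, SemCont FE.P (fun _ : Unit => normSeminorm ℂ ℂ) (φ i)) ∧
        ∀ x, S x = ∑ i, φ i x • e i := by
  obtain ⟨_, hE, _⟩ := FE.exists_withSeminorms_t1Space
  have := hE.topologicalAddGroup
  have := hE.continuousSMul
  have : FiniteDimensional ℂ (LinearMap.range S) := hSfin
  obtain ⟨r, e, φ, hSφ⟩ :=
    exists_sum_smul_of_finiteDimensional_range ((semCont_iff_continuous hE hE S).1 hS)
  exact ⟨r, e, fun i => φ i,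
    fun i => (semCont_iff_continuous hE (norm_withSeminorms_unit ℂ ℂ) _).2 (φ i).cont, hSφ⟩

end FrechetSp

section ProjectiveTensor

variable {E F G : Type*} [AddCommGroup E] [Module ℂ E] [AddCommGroup F] [Module ℂ F]
  [AddCommGroup G] [Module ℂ G] {FE : FrechetSp E} {FF : FrechetSp F} {FG : FrechetSp G}

theorem tendsto_sum_smul_of_semCont {x : ℕ → E} {y : ℕ → F}
    (hx : ∀ k, Tendsto (fun n => FE.P k (x n)) atTop (𝓝 0))
    (hy : ∀ k, Summable fun n => FF.P k (y n))
    (hψ : ∀ ψ : F →ₗ[ℂ] ℂ, SemCont FF.P (fun _ : Unit => normSeminorm ℂ ℂ) ψ →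
      ∀ k, Tendsto (fun N => FE.P k (∑ n ∈ Finset.range N, ψ (y n) • x n)) atTop (𝓝 0))
    {φ : E →ₗ[ℂ] ℂ} (hφ : SemCont FE.P (fun _ : Unit => normSeminorm ℂ ℂ) φ) (k : ℕ) :
    Tendsto (fun N => FF.P k (∑ n ∈ Finset.range N, φ (x n) • y n)) atTop (𝓝 0) := by
  obtain ⟨M, hM⟩ := (hφ.tendsto_zero hx ()).bddAbove_range
  have hM : ∀ n, ‖φ (x n)‖ ≤ M := fun n => hM ⟨n, rfl⟩
  obtain ⟨z, hz⟩ := FF.exists_tendsto_sum_of_summable (f := fun n => φ (x n) • y n) fun j =>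
    ((hy j).mul_left M).of_nonneg_of_le (fun n => apply_nonneg _ _) fun n => by
      rw [map_smul_eq_mul]
      exact mul_le_mul_of_nonneg_right (hM n) (apply_nonneg _ _)
  obtain rfl : z = 0 := FF.eq_zero_of_forall_semCont fun ψ hψc => by
    have hlim : Tendsto (fun N => ψ (∑ n ∈ Finset.range N, φ (x n) • y n)) atTop (𝓝 (ψ z)) := by
      rw [tendsto_iff_norm_sub_tendsto_zero]
      simpa only [← map_sub, coe_normSeminorm] using hψc.tendsto_zero hz ()
    -- `ψ (∑ φ (x n) • y n) = φ (∑ ψ (y n) • x n)`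
    have hzero : Tendsto (fun N => ψ (∑ n ∈ Finset.range N, φ (x n) • y n)) atTop (𝓝 0) := by
      rw [tendsto_zero_iff_norm_tendsto_zero]
      refine (hφ.tendsto_zero (hψ ψ hψc) ()).congr fun N => ?_
      simp only [coe_normSeminorm, map_sum, map_smul, smul_eq_mul, mul_comm]
    exact tendsto_nhds_unique hlim hzero
  simpa using hz k

namespace ProjTensor

variable (PT : ProjTensor FE FF FG)

theorem seminorm_sum_le (k : ℕ) {α : Type*} (s : Finset α) (a : α → E) (b : α → F) :
    FG.P k (∑ j ∈ s, PT.ι (a j) (b j)) ≤ ∑ j ∈ s, FE.P k (a j) * FF.P k (b j) := by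
  rw [← s.sum_coe_sort, ← s.sum_coe_sort, ← s.equivFin.symm.sum_comp,
    ← s.equivFin.symm.sum_comp, PT.seminorm_eq]
  refine csInf_le ⟨0, ?_⟩ ⟨_, _, _, rfl, rfl⟩
  rintro _ ⟨m, a', b', -, rfl⟩
  exact Finset.sum_nonneg fun j _ => mul_nonneg (apply_nonneg _ _) (apply_nonneg _ _)

theorem seminorm_le_of_approx (k : ℕ) {x : ℕ → E} {y : ℕ → F} {u : G}
    (hu : Tendsto (fun N => FG.P k (u - ∑ n ∈ Finset.range N, PT.ι (x n) (y n))) atTop (𝓝 0))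
    (hy : Summable fun n => FF.P k (y n)) {r : ℕ} (e : Fin r → E) (φ : Fin r → E →ₗ[ℂ] ℂ)
    (hφ : ∀ i, Tendsto (fun N => FF.P k (∑ n ∈ Finset.range N, φ i (x n) • y n)) atTop (𝓝 0))
    {ε : ℝ} (hε : ∀ n, FE.P k (x n - ∑ i, φ i (x n) • e i) ≤ ε) :
    FG.P k u ≤ ε * ∑' n, FF.P k (y n) := by
  set w : Fin r → ℕ → F := fun i N => ∑ n ∈ Finset.range N, φ i (x n) • y n
  set s : ℕ → G := fun N => ∑ n ∈ Finset.range N, PT.ι (x n) (y n)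
  have hsplit : ∀ N, s N = ∑ n ∈ Finset.range N, PT.ι (x n - ∑ i, φ i (x n) • e i) (y n) +
      ∑ i, PT.ι (e i) (w i N) := fun N => by
    simp only [s, w, map_sub, LinearMap.sub_apply, Finset.sum_sub_distrib, map_sum,
      LinearMap.sum_apply, map_smul, LinearMap.smul_apply]
    rw [Finset.sum_comm]
    abel
  have hbound : ∀ N, FG.P k u ≤
      FG.P k (u - s N) + ε * ∑' n, FF.P k (y n) + ∑ i, FE.P k (e i) * FF.P k (w i N) := by
    intro N
    have hε0 : 0 ≤ ε := (apply_nonneg _ _).trans (hε 0)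
    calc FG.P k u = FG.P k (u - s N + s N) := by rw [sub_add_cancel]
      _ ≤ FG.P k (u - s N) + FG.P k (s N) := map_add_le_add _ _ _
      _ ≤ _ := by
        rw [add_assoc, hsplit]
        refine add_le_add le_rfl ((map_add_le_add _ _ _).trans (add_le_add ?_ ?_))
        · refine (PT.seminorm_sum_le k _ _ _).trans ?_
          calc _ ≤ ∑ n ∈ Finset.range N, ε * FF.P k (y n) :=
                Finset.sum_le_sum fun n _ => mul_le_mul_of_nonneg_right (hε n) (apply_nonneg _ _)
            _ ≤ ε * ∑' n, FF.P k (y n) := by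
                rw [← Finset.mul_sum]
                exact mul_le_mul_of_nonneg_left
                  (hy.sum_le_tsum _ fun n _ => apply_nonneg _ _) hε0
        · exact PT.seminorm_sum_le k _ _ _
  refine ge_of_tendsto' (x := atTop) ?_ hbound
  simpa using (hu.add_const _).add (tendsto_finsetSum _ fun i _ => (hφ i).const_mul _)

theorem eq_zero_of_tendsto_zero_of_summable (hAP : HasAP FE.P) {x : ℕ → E} {y : ℕ → F} {u : G}
    (hx : ∀ k, Tendsto (fun n => FE.P k (x n)) atTop (𝓝 0))
    (hy : ∀ k, Summable fun n => FF.P k (y n))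
    (hu : ∀ k, Tendsto (fun N => FG.P k (u - ∑ n ∈ Finset.range N, PT.ι (x n) (y n)))
      atTop (𝓝 0))
    (hψ : ∀ ψ : F →ₗ[ℂ] ℂ, SemCont FF.P (fun _ : Unit => normSeminorm ℂ ℂ) ψ →
      ∀ k, Tendsto (fun N => FE.P k (∑ n ∈ Finset.range N, ψ (y n) • x n)) atTop (𝓝 0)) :
    u = 0 := by
  refine FG.sep u fun k => le_antisymm (le_of_forall_pos_le_add fun ε hε => ?_) (apply_nonneg _ _)
  set Y := ∑' n, FF.P k (y n)
  have hY : 0 ≤ Y := tsum_nonneg fun n => apply_nonneg _ _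
  obtain ⟨S, hS, hSfin, hSx⟩ := hAP LinearMap.id (fun j => ⟨{j}, 1, one_pos, by simp⟩)
    (Set.range x) (isPrecompactSem_range_of_tendsto_zero _ hx) (ε / (Y + 1)) (by positivity) {k}
  obtain ⟨r, e, φ, hφ, hSφ⟩ := FE.exists_sum_smul_of_finRank hS hSfin
  calc FG.P k u ≤ ε / (Y + 1) * Y :=
        PT.seminorm_le_of_approx k (hu k) (hy k) e φ
          (fun i => tendsto_sum_smul_of_semCont hx hy hψ (hφ i) k) fun n => by
            simpa [← hSφ] using (hSx (x n) ⟨n, rfl⟩ k (Finset.mem_singleton_self k)).le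
    _ ≤ 0 + ε := by
        rw [zero_add, div_mul_eq_mul_div, div_le_iff₀ (by positivity)]
        nlinarith

end ProjTensor

end ProjectiveTensor

theorem stmt_12_general {E F G : Type*} [AddCommGroup E] [Module ℂ E] [AddCommGroup F] [Module ℂ F]
    [AddCommGroup G] [Module ℂ G]
    (FE : FrechetSp E) (FF : FrechetSp F) (FG : FrechetSp G)
    (hAP : HasAP FE.P) (PT : ProjTensor FE FF FG)
    (x : ℕ → E) (y : ℕ → F)
    (hsum : ∀ k : ℕ, Summable fun n => FE.P k (x n) * FF.P k (y n))
    (u : G)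
    (hu : ∀ k : ℕ, Filter.Tendsto
      (fun N => FG.P k (u - ∑ n ∈ Finset.range N, PT.ι (x n) (y n))) Filter.atTop (nhds 0))
    (hψ : ∀ ψ : F →ₗ[ℂ] ℂ, SemCont FF.P (fun _ : Unit => normSeminorm ℂ ℂ) ψ →
      ∀ k : ℕ, Filter.Tendsto
        (fun N => FE.P k (∑ n ∈ Finset.range N, ψ (y n) • x n)) Filter.atTop (nhds 0)) :
    u = 0 := by
  obtain ⟨t, ht0, ht⟩ := exists_pos_rescaling (fun _ _ => apply_nonneg _ _)
    (fun _ _ => apply_nonneg _ _) (fun n => FE.monotone_seminorm (x n))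
    (fun n => FF.monotone_seminorm (y n)) hsum
  have hnorm : ∀ n, ‖(t n : ℂ)‖ = t n := fun n => by simp [(ht0 n).le]
  have hne : ∀ n, (t n : ℂ) ≠ 0 := fun n => by exact_mod_cast (ht0 n).ne'
  have hι : ∀ n, PT.ι ((t n : ℂ) • x n) ((t n : ℂ)⁻¹ • y n) = PT.ι (x n) (y n) := fun n => by
    rw [map_smul, map_smul, LinearMap.smul_apply, smul_smul, inv_mul_cancel₀ (hne n), one_smul]
  have hψt : ∀ (ψ : F →ₗ[ℂ] ℂ) n, ψ ((t n : ℂ)⁻¹ • y n) • (t n : ℂ) • x n = ψ (y n) • x n :=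
    fun ψ n => by
      rw [smul_smul, map_smul, smul_eq_mul, mul_right_comm, inv_mul_cancel₀ (hne n), one_mul]
  refine PT.eq_zero_of_tendsto_zero_of_summable hAP (x := fun n => (t n : ℂ) • x n)
    (y := fun n => (t n : ℂ)⁻¹ • y n) (fun k => ?_) (fun k => ?_) (fun k => ?_) fun ψ hψc k => ?_
  · simpa only [map_smul_eq_mul, hnorm] using (ht k).1
  · simpa only [map_smul_eq_mul, norm_inv, hnorm, ← div_eq_inv_mul] using (ht k).2
  · simpa only [hι] using hu k
  · simpa only [hψt] using hψ ψ hψc k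

theorem stmt_12 {E F G : Type*} [AddCommGroup E] [Module ℂ E] [AddCommGroup F] [Module ℂ F]
    [AddCommGroup G] [Module ℂ G]
    (FE : FrechetSp E) (FF : FrechetSp F) (FG : FrechetSp G)
    (hAP : HasAP FE.P) (PT : ProjTensor FE FF FG)
    (x : ℕ → E) (y : ℕ → F)
    (hxb : ∀ k : ℕ, BddAbove (Set.range fun n => FE.P k (x n)))
    (hyb : ∀ k : ℕ, BddAbove (Set.range fun n => FF.P k (y n)))
    (hsum : ∀ k : ℕ, Summable fun n => FE.P k (x n) * FF.P k (y n))
    (u : G)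
    (hu : ∀ k : ℕ, Filter.Tendsto
      (fun N => FG.P k (u - ∑ n ∈ Finset.range N, PT.ι (x n) (y n))) Filter.atTop (nhds 0))
    (hψ : ∀ ψ : F →ₗ[ℂ] ℂ, SemCont FF.P (fun _ : Unit => normSeminorm ℂ ℂ) ψ →
      ∀ k : ℕ, Filter.Tendsto
        (fun N => FE.P k (∑ n ∈ Finset.range N, ψ (y n) • x n)) Filter.atTop (nhds 0)) :
    u = 0 :=
  stmt_12_general FE FF FG hAP PT x y hsum u hu hψ

end
end
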